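/- arXiv:2312.15827 — 2 statements merged into one kernel-verified Lean document; each statement's English description precedes it below -/
import Mathlib

section
/- Let X be a connected, locally connected, cutpoint-free T₁ topological space and let x, x' ∈ X. Assume that X ∖ {x, x'} has at least three connected components. If y, z ∈ X are contained in two distinct connected components of X ∖ {x, x'}, then X ∖ {y, z} is connected. -/
/-!
Removing `x` and `x'` leaves a third component `E`, avoiding `y` and `z`; since neither `x` nor
`x'` is a cut point, both lie in the closure of `E`, so `E ∪ {x, x'}` is a connected subset of
`X ∖ {y, z}`. Any other point `w` of `X ∖ {y, z}` lies in a component `K` of `X ∖ {x, x', y, z}`.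
As `y` is not a cut point, `K` is not clopen in `X ∖ {y}`, so its closure contains one of
`x, x', z`; symmetrically one of `x, x', y`. It cannot contain both `y` and `z`, which lie in
different components of `X ∖ {x, x'}`, so the closure of `K` reaches `x` or `x'` and `w` is
joined to `E ∪ {x, x'}`.
-/

open Set Topology

section

variable {X : Type*} [TopologicalSpace X]

theorem IsPreconnected.insert_of_mem_closure {s : Set X} {v : X} (hs : IsPreconnected s)
    (hv : v ∈ closure s) : IsPreconnected (insert v s) :=
  hs.subset_closure (subset_insert v s) (insert_subset hv subset_closure)

theorem closure_connectedComponentIn_inter_subset (U : Set X) (w : X) :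
    closure (connectedComponentIn U w) ∩ U ⊆ connectedComponentIn U w := by
  rintro v ⟨hv, hvU⟩
  have hwU : w ∈ U := connectedComponentIn_nonempty_iff.mp (closure_nonempty_iff.mp ⟨v, hv⟩)
  exact (isPreconnected_connectedComponentIn.insert_of_mem_closure hv).subset_connectedComponentIn
    (mem_insert_of_mem v (mem_connectedComponentIn hwU))
    (insert_subset hvU (connectedComponentIn_subset U w)) (mem_insert v _)

theorem connectedComponentIn_eq_of_mem_closure_connectedComponentIn {U s : Set X} {w y z : X}
    (hUs : U ⊆ s) (hy : y ∈ s) (hz : z ∈ s) (hyK : y ∈ closure (connectedComponentIn U w))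
    (hzK : z ∈ closure (connectedComponentIn U w)) :
    connectedComponentIn s y = connectedComponentIn s z := by
  have hyzK : IsPreconnected (insert y (insert z (connectedComponentIn U w))) :=
    isPreconnected_connectedComponentIn.subset_closure
      ((subset_insert _ _).trans (subset_insert _ _))
      (insert_subset hyK (insert_subset hzK subset_closure))
  exact connectedComponentIn_eq (hyzK.subset_connectedComponentIn (mem_insert _ _)
    (insert_subset hy (insert_subset hz ((connectedComponentIn_subset U w).trans hUs)))
    (mem_insert_of_mem _ (mem_insert _ _)))

theorem exists_ne_and_ne_of_three_ne {α : Type*} {a b c : α} (hab : a ≠ b) (hac : a ≠ c)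
    (hbc : b ≠ c) (u v : α) : ∃ d, d ≠ u ∧ d ≠ v := by
  by_contra! hd
  have := hd a; have := hd b; have := hd c
  by_cases a = u <;> by_cases b = u <;> by_cases c = u <;> simp_all

theorem mem_connectedComponentIn_iff_coe_eq {s : Set X} (p q : s) :
    (q : X) ∈ connectedComponentIn s p ↔ (q : ConnectedComponents s) = p := by
  rw [connectedComponentIn_eq_image p.2, Subtype.val_injective.mem_set_image,
    ConnectedComponents.coe_eq_coe']

theorem exists_connectedComponentIn_not_mem_of_three_components {s : Set X}
    (h : ∃ a b c : ConnectedComponents s, a ≠ b ∧ a ≠ c ∧ b ≠ c) {y z : X} (hy : y ∈ s)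
    (hz : z ∈ s) : ∃ w ∈ s, y ∉ connectedComponentIn s w ∧ z ∉ connectedComponentIn s w := by
  obtain ⟨a, b, c, hab, hac, hbc⟩ := h
  obtain ⟨d, hdy, hdz⟩ := exists_ne_and_ne_of_three_ne hab hac hbc
    (ConnectedComponents.mk ⟨y, hy⟩) (ConnectedComponents.mk ⟨z, hz⟩)
  obtain ⟨p, rfl⟩ := ConnectedComponents.surjective_coe d
  refine ⟨p, p.2, ?_, ?_⟩
  · exact fun hmem => hdy ((mem_connectedComponentIn_iff_coe_eq p ⟨y, hy⟩).mp hmem).symm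
  · exact fun hmem => hdz ((mem_connectedComponentIn_iff_coe_eq p ⟨z, hz⟩).mp hmem).symm

theorem exists_mem_closure_connectedComponentIn_of_isPreconnected_compl_singleton
    [LocallyConnectedSpace X] {U : Set X} {p q w : X} (hp : IsPreconnected ({p}ᶜ : Set X))
    (hU : IsOpen U) (hpU : p ∉ U) (hw : w ∈ U) (hq : q ∉ connectedComponentIn U w)
    (hqp : q ≠ p) : ∃ v ∈ closure (connectedComponentIn U w), v ∉ U ∧ v ≠ p := by
  by_contra! hbdry
  refine hq (hp.subset_of_closure_inter_subset hU.connectedComponentIn ?_ ?_ hqp)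
  · exact ⟨w, fun hwp => hpU (hwp ▸ hw), mem_connectedComponentIn hw⟩
  · rintro v ⟨hvK, hvp⟩
    by_cases hvU : v ∈ U
    · exact closure_connectedComponentIn_inter_subset U w ⟨hvK, hvU⟩
    · exact absurd (hbdry v hvK hvU) hvp

theorem mem_closure_connectedComponentIn_compl_pair [LocallyConnectedSpace X] [T1Space X]
    {a b q w : X} (hb : IsPreconnected ({b}ᶜ : Set X)) (hw : w ∈ ({a, b} : Set X)ᶜ)
    (hq : q ∈ ({a, b} : Set X)ᶜ) (hqw : q ∉ connectedComponentIn ({a, b} : Set X)ᶜ w) :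
    a ∈ closure (connectedComponentIn ({a, b} : Set X)ᶜ w) := by
  obtain ⟨v, hvK, hv, hvb⟩ :=
    exists_mem_closure_connectedComponentIn_of_isPreconnected_compl_singleton hb
      (toFinite _).isClosed.isOpen_compl (by simp) hw hqw (by rintro rfl; simp at hq)
  obtain rfl : v = a := by simpa [hvb] using hv
  exact hvK

theorem isPreconnected_connectedComponentIn_compl_pair_union [LocallyConnectedSpace X]
    [T1Space X] {a b q w : X} (ha : IsPreconnected ({a}ᶜ : Set X))
    (hb : IsPreconnected ({b}ᶜ : Set X)) (hw : w ∈ ({a, b} : Set X)ᶜ)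
    (hq : q ∈ ({a, b} : Set X)ᶜ) (hqw : q ∉ connectedComponentIn ({a, b} : Set X)ᶜ w) :
    IsPreconnected (connectedComponentIn ({a, b} : Set X)ᶜ w ∪ {a, b}) := by
  have hbK : b ∈ closure (connectedComponentIn ({a, b} : Set X)ᶜ w) := by
    rw [pair_comm] at hw hq hqw ⊢
    exact mem_closure_connectedComponentIn_compl_pair ha hw hq hqw
  exact isPreconnected_connectedComponentIn.subset_closure subset_union_left
    (union_subset subset_closure (insert_subset
      (mem_closure_connectedComponentIn_compl_pair hb hw hq hqw) (singleton_subset_iff.mpr hbK)))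

theorem exists_isPreconnected_mem_pair_of_connectedComponentIn_ne [LocallyConnectedSpace X]
    [T1Space X] {x x' y z w : X} (hy' : IsPreconnected ({y}ᶜ : Set X))
    (hz' : IsPreconnected ({z}ᶜ : Set X)) (hy : y ∈ ({x, x'} : Set X)ᶜ)
    (hz : z ∈ ({x, x'} : Set X)ᶜ)
    (hyz : connectedComponentIn ({x, x'} : Set X)ᶜ y ≠ connectedComponentIn ({x, x'} : Set X)ᶜ z)
    (hw : w ∈ ({x, x', y, z} : Set X)ᶜ) :
    ∃ v ∈ ({x, x'} : Set X), ∃ T ⊆ ({y, z} : Set X)ᶜ, w ∈ T ∧ v ∈ T ∧ IsPreconnected T := by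
  set U := ({x, x', y, z} : Set X)ᶜ
  set K := connectedComponentIn U w
  have hU : IsOpen U := (toFinite _).isClosed.isOpen_compl
  have hKU : K ⊆ U := connectedComponentIn_subset U w
  have hUs : U ⊆ ({x, x'} : Set X)ᶜ :=
    compl_subset_compl.mpr (insert_subset_insert (singleton_subset_iff.mpr (mem_insert x' _)))
  have hUyz : U ⊆ ({y, z} : Set X)ᶜ :=
    compl_subset_compl.mpr ((subset_insert _ _).trans (subset_insert _ _))
  have hyU : y ∉ U := fun h => hUyz h (mem_insert y _)
  have hzU : z ∉ U := fun h => hUyz h (mem_insert_of_mem y rfl)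
  have hyz' : y ≠ z := by rintro rfl; exact hyz rfl
  obtain ⟨v, hvK, hvU, hvy⟩ :=
    exists_mem_closure_connectedComponentIn_of_isPreconnected_compl_singleton hy' hU hyU hw
      (fun h => hzU (hKU h)) hyz'.symm
  obtain ⟨v', hv'K, hv'U, hv'z⟩ :=
    exists_mem_closure_connectedComponentIn_of_isPreconnected_compl_singleton hz' hU hzU hw
      (fun h => hyU (hKU h)) hyz'
  obtain ⟨u, hu, huK⟩ : ∃ u ∈ ({x, x'} : Set X), u ∈ closure K := by
    by_contra! hpair
    obtain rfl : v = z := by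
      simp only [U, mem_compl_iff, not_not, mem_insert_iff, mem_singleton_iff] at hvU
      grind [hpair x (by simp), hpair x' (by simp)]
    obtain rfl : v' = y := by
      simp only [U, mem_compl_iff, not_not, mem_insert_iff, mem_singleton_iff] at hv'U
      grind [hpair x (by simp), hpair x' (by simp)]
    exact hyz (connectedComponentIn_eq_of_mem_closure_connectedComponentIn hUs hy hz hv'K hvK)
  have huyz : u ∉ ({y, z} : Set X) := by
    rintro (rfl | rfl)
    exacts [hy hu, hz hu]
  refine ⟨u, hu, insert u K, insert_subset huyz (hKU.trans hUyz),
    mem_insert_of_mem _ (mem_connectedComponentIn hw), mem_insert _ _,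
    isPreconnected_connectedComponentIn.insert_of_mem_closure huK⟩

end

theorem compl_pair_connected_of_separated_by_big_cut_pair_general
    {X : Type*} [TopologicalSpace X] [LocallyConnectedSpace X] [T1Space X]
    (hcut : ∀ p : X, IsConnected ({p}ᶜ : Set X))
    (x x' : X)
    (hbig : ∃ a b c : ConnectedComponents ↥(({x, x'} : Set X)ᶜ), a ≠ b ∧ a ≠ c ∧ b ≠ c)
    (y z : X) (hy : y ∈ (({x, x'} : Set X)ᶜ)) (hz : z ∈ (({x, x'} : Set X)ᶜ))
    (hyz : connectedComponentIn (({x, x'} : Set X)ᶜ) y ≠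
      connectedComponentIn (({x, x'} : Set X)ᶜ) z) :
    IsConnected (({y, z} : Set X)ᶜ) := by
  have hcut' (p : X) : IsPreconnected ({p}ᶜ : Set X) := (hcut p).isPreconnected
  obtain ⟨w, hw, hyw, hzw⟩ := exists_connectedComponentIn_not_mem_of_three_components hbig hy hz
  set P := connectedComponentIn ({x, x'} : Set X)ᶜ w ∪ {x, x'}
  have hP : IsPreconnected P :=
    isPreconnected_connectedComponentIn_compl_pair_union (hcut' x) (hcut' x') hw hy hyw
  have hPyz : P ⊆ ({y, z} : Set X)ᶜ := by
    rintro p (hp | hp) (rfl | rfl)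
    exacts [hyw hp, hzw hp, hy hp, hz hp]
  have hxP : x ∈ P := Or.inr (mem_insert x _)
  refine ⟨⟨x, hPyz hxP⟩, isPreconnected_of_forall x fun u hu => ?_⟩
  by_cases hux : u ∈ ({x, x'} : Set X)
  · exact ⟨P, hPyz, hxP, Or.inr hux, hP⟩
  · obtain ⟨v, hv, T, hTyz, huT, hvT, hT⟩ :=
      exists_isPreconnected_mem_pair_of_connectedComponentIn_ne (hcut' y) (hcut' z) hy hz hyz
        (show u ∉ ({x, x', y, z} : Set X) by rintro (h | h | h | h) <;> simp_all)
    exact ⟨P ∪ T, union_subset hPyz hTyz, Or.inl hxP, Or.inr huT,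
      hP.union v (Or.inr hv) hvT hT⟩

/-- Let `X` be a connected, locally connected, cutpoint-free T₁ space and
let `x, x' ∈ X`.  Assume `X ∖ {x, x'}` has at least three connected components.  If
`y, z ∈ X` lie in two distinct connected components of `X ∖ {x, x'}` then `X ∖ {y, z}`
is connected. -/
theorem compl_pair_connected_of_separated_by_big_cut_pair
    {X : Type*} [TopologicalSpace X] [ConnectedSpace X] [LocallyConnectedSpace X] [T1Space X]
    (hcut : ∀ p : X, IsConnected ({p}ᶜ : Set X))
    (x x' : X)
    (hbig : ∃ a b c : ConnectedComponents ↥(({x, x'} : Set X)ᶜ), a ≠ b ∧ a ≠ c ∧ b ≠ c)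
    (y z : X) (hy : y ∈ (({x, x'} : Set X)ᶜ)) (hz : z ∈ (({x, x'} : Set X)ᶜ))
    (hyz : connectedComponentIn (({x, x'} : Set X)ᶜ) y ≠
      connectedComponentIn (({x, x'} : Set X)ᶜ) z) :
    IsConnected (({y, z} : Set X)ᶜ) :=
  compl_pair_connected_of_separated_by_big_cut_pair_general hcut x x' hbig y z hy hz hyz
end

section
/- Let X be a finite topological graph and let A ⊆ X be a connected subspace. Then the set cl(A) ∖ A is finite, where cl(A) denotes the closure of A in X. -/
open Set Topology

namespace TreesOfGraphs

/-- Gluing relation defining the geometric realization of a finite multigraph: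
each endpoint of each edge interval is glued to its assigned vertex. -/
def GraphGlueRel (V E : Type) (ends : E → V × V) :
    (V ⊕ E × unitInterval) → (V ⊕ E × unitInterval) → Prop := fun a b =>
  (∃ e : E, a = Sum.inl (ends e).1 ∧ b = Sum.inr (e, 0)) ∨
  (∃ e : E, a = Sum.inl (ends e).2 ∧ b = Sum.inr (e, 1))

/-- The geometric realization of the finite multigraph with vertex type `V`,
edge type `E` and endpoint assignment `ends`. -/
def GraphRealization (V E : Type) (ends : E → V × V) : Type :=
  Quot (GraphGlueRel V E ends)

noncomputable instance (V E : Type) (ends : E → V × V) :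
    TopologicalSpace (GraphRealization V E ends) :=
  letI : TopologicalSpace V := ⊥
  letI : TopologicalSpace E := ⊥
  inferInstanceAs (TopologicalSpace (Quot (GraphGlueRel V E ends)))

/-- A topological space is a finite topological graph if it is homeomorphic to the
geometric realization of a finite multigraph. -/
def IsFiniteTopGraph (X : Type*) [TopologicalSpace X] : Prop :=
  ∃ (V E : Type) (_ : Fintype V) (_ : Fintype E) (ends : E → V × V),
    Nonempty (X ≃ₜ GraphRealization V E ends)

/-- A set in a linear order with no strictly increasing triple is finite. -/
lemma finite_of_no_three {α : Type*} [LinearOrder α] {S : Set α}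
    (h : ∀ x ∈ S, ∀ y ∈ S, ∀ z ∈ S, x < y → y < z → False) : S.Finite := by
  by_cases hs : S.Subsingleton
  · exact hs.finite
  · obtain ⟨a, ha, b, hb, hab⟩ := Set.not_subsingleton_iff.mp hs
    wlog hlt : a < b generalizing a b
    · exact this b hb a ha hab.symm ((lt_or_gt_of_ne hab).resolve_left hlt)
    have hsub : S ⊆ {a, b} := by
      intro c hc
      by_contra hc'
      simp only [mem_insert_iff, mem_singleton_iff, not_or] at hc'
      rcases lt_trichotomy c a with h1 | h1 | h1
      · exact h c hc a ha b hb h1 hlt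
      · exact hc'.1 h1
      · rcases lt_trichotomy c b with h2 | h2 | h2
        · exact h a ha c hc b hb h1 h2
        · exact hc'.2 h2
        · exact h a ha b hb c hc hlt h2
    exact (((Set.finite_singleton b).insert a)).subset hsub

section Aux

variable {V E : Type} (ends : E → V × V)

/-- Normalization map sending edge endpoints to their assigned vertices. -/
noncomputable def gnorm : (V ⊕ E × unitInterval) → (V ⊕ E × unitInterval)
  | .inl v => .inl v
  | .inr (e, t) =>
      if t = 0 then .inl (ends e).1 else if t = 1 then .inl (ends e).2 else .inr (e, t)

lemma gnorm_inl (v : V) : gnorm ends (.inl v) = .inl v := rfl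

lemma gnorm_inr (e : E) (t : unitInterval) :
    gnorm ends (.inr (e, t)) =
      if t = 0 then .inl (ends e).1 else if t = 1 then .inl (ends e).2 else .inr (e, t) := rfl

lemma gnorm_resp : ∀ a b, GraphGlueRel V E ends a b → gnorm ends a = gnorm ends b := by
  rintro a b (⟨e, rfl, rfl⟩ | ⟨e, rfl, rfl⟩) <;>
    simp [gnorm, (one_ne_zero : (1 : unitInterval) ≠ 0)]

/-- Decoding map out of the quotient. -/
noncomputable def gdec : GraphRealization V E ends → (V ⊕ E × unitInterval) :=
  Quot.lift (gnorm ends) (gnorm_resp ends)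

/-- The point on edge `e` with parameter `t`. -/
def edgePt (e : E) (t : unitInterval) : GraphRealization V E ends :=
  Quot.mk _ (.inr (e, t))

lemma gdec_edgePt (e : E) {t : unitInterval} (h0 : t ≠ 0) (h1 : t ≠ 1) :
    gdec ends (edgePt ends e t) = .inr (e, t) := by
  simp [gdec, edgePt, gnorm, h0, h1]

lemma edgePt_inj {e e' : E} {t t' : unitInterval} (h0 : t ≠ 0) (h1 : t ≠ 1)
    (h : edgePt ends e t = edgePt ends e' t') : e = e' ∧ t = t' := by
  have H := congrArg (gdec ends) h
  rw [gdec_edgePt ends e h0 h1] at H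
  have H' : (Sum.inr (e, t) : V ⊕ E × unitInterval) = gnorm ends (.inr (e', t')) := H
  rw [gnorm_inr] at H'
  split_ifs at H'
  injection H' with H2
  exact ⟨congrArg Prod.fst H2, congrArg Prod.snd H2⟩

lemma preimage_edgePt_image (e : E) (S : Set unitInterval)
    (hS : ∀ t ∈ S, t ≠ 0 ∧ t ≠ 1) :
    Quot.mk (GraphGlueRel V E ends) ⁻¹' (edgePt ends e '' S) =
      Sum.inr '' ({e} ×ˢ S) := by
  ext w
  constructor
  · rintro ⟨t, ht, hq⟩
    have H := congrArg (gdec ends) hq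
    rw [gdec_edgePt ends e (hS t ht).1 (hS t ht).2] at H
    cases w with
    | inl v => simp [gdec, gnorm] at H
    | inr p =>
      obtain ⟨e'', s⟩ := p
      have H' : (Sum.inr (e, t) : V ⊕ E × unitInterval) = gnorm ends (.inr (e'', s)) := H
      rw [gnorm_inr] at H'
      split_ifs at H'
      injection H' with H2
      obtain ⟨rfl, rfl⟩ : e = e'' ∧ t = s :=
        ⟨congrArg Prod.fst H2, congrArg Prod.snd H2⟩
      exact ⟨(e, t), ⟨rfl, ht⟩, rfl⟩
  · rintro ⟨⟨e', s⟩, ⟨he, hs⟩, rfl⟩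
    simp only [mem_singleton_iff] at he
    subst he
    exact ⟨s, hs, rfl⟩

lemma isOpen_edge_Ioo (e : E) (a b : unitInterval) :
    IsOpen (edgePt ends e '' Ioo a b) := by
  letI : TopologicalSpace V := ⊥
  letI : TopologicalSpace E := ⊥
  haveI : DiscreteTopology V := ⟨rfl⟩
  haveI : DiscreteTopology E := ⟨rfl⟩
  have hq : IsQuotientMap (Quot.mk (GraphGlueRel V E ends)) := isQuotientMap_quot_mk
  refine hq.isOpen_preimage.mp ?_
  erw [
    preimage_edgePt_image ends e (Ioo a b) (fun t ht =>
      ⟨(lt_of_le_of_lt unitInterval.nonneg' ht.1).ne',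
       (lt_of_lt_of_le ht.2 unitInterval.le_one').ne⟩)]
  exact isOpenMap_inr _ ((isOpen_discrete _).prod isOpen_Ioo)

lemma isClosed_edge_Icc (e : E) {a b : unitInterval} (ha : a ≠ 0) (hb : b ≠ 1) :
    IsClosed (edgePt ends e '' Icc a b) := by
  letI : TopologicalSpace V := ⊥
  letI : TopologicalSpace E := ⊥
  haveI : DiscreteTopology V := ⟨rfl⟩
  haveI : DiscreteTopology E := ⟨rfl⟩
  have hq : IsQuotientMap (Quot.mk (GraphGlueRel V E ends)) := isQuotientMap_quot_mk
  refine hq.isClosed_preimage.mp ?_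
  erw [
    preimage_edgePt_image ends e (Icc a b) (fun t ht =>
      ⟨fun h => ha (le_antisymm (h ▸ ht.1) unitInterval.nonneg'),
       fun h => hb (le_antisymm unitInterval.le_one' (h ▸ ht.2))⟩)]
  exact Topology.IsClosedEmbedding.inr.isClosedMap _
    ((isClosed_discrete _).prod isClosed_Icc)

/-- The finite set of vertex points. -/
def vtxSet : Set (GraphRealization V E ends) :=
  Set.range fun v => Quot.mk (GraphGlueRel V E ends) (.inl v)

lemma mem_vtx_or_edge (y : GraphRealization V E ends) :
    y ∈ vtxSet ends ∨ ∃ e t, t ≠ 0 ∧ t ≠ 1 ∧ y = edgePt ends e t := by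
  obtain ⟨w, rfl⟩ := Quot.exists_rep y
  cases w with
  | inl v => exact Or.inl ⟨v, rfl⟩
  | inr p =>
    obtain ⟨e, t⟩ := p
    by_cases h0 : t = 0
    · subst h0
      exact Or.inl ⟨(ends e).1, Quot.sound (Or.inl ⟨e, rfl, rfl⟩)⟩
    by_cases h1 : t = 1
    · subst h1
      exact Or.inl ⟨(ends e).2, Quot.sound (Or.inr ⟨e, rfl, rfl⟩)⟩
    exact Or.inr ⟨e, t, h0, h1, rfl⟩

/-- Dichotomy for a preconnected set missing both endpoints of an arc. -/
lemma preconnected_dichotomy {A : Set (GraphRealization V E ends)}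
    (hA : IsPreconnected A) (e : E) {a b : unitInterval}
    (ha0 : a ≠ 0) (hb1 : b ≠ 1) (hpa : edgePt ends e a ∉ A) (hpb : edgePt ends e b ∉ A) :
    A ∩ (edgePt ends e '' Ioo a b) = ∅ ∨ A ⊆ edgePt ends e '' Icc a b := by
  set U : Set (GraphRealization V E ends) := edgePt ends e '' Ioo a b with hUdef
  set C : Set (GraphRealization V E ends) := edgePt ends e '' Icc a b with hCdef
  have hU : IsOpen U := isOpen_edge_Ioo ends e a b
  have hC : IsClosed C := isClosed_edge_Icc ends e ha0 hb1
  have hUC : U ⊆ C := image_mono Ioo_subset_Icc_self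
  have hsub : A ⊆ U ∪ Cᶜ := by
    intro w hw
    by_cases hwc : w ∈ C
    · left
      obtain ⟨s, hs, rfl⟩ := hwc
      rcases eq_or_lt_of_le hs.1 with h | h
      · exact absurd hw (h ▸ hpa)
      rcases eq_or_lt_of_le hs.2 with h' | h'
      · exact absurd hw (h' ▸ hpb)
      exact ⟨s, ⟨h, h'⟩, rfl⟩
    · exact Or.inr hwc
  rcases (A ∩ U).eq_empty_or_nonempty with hE | hNE
  · exact Or.inl hE
  rcases (A ∩ Cᶜ).eq_empty_or_nonempty with hE' | hNE'
  · right
    intro w hw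
    by_contra hwc
    exact absurd hE' (Set.nonempty_iff_ne_empty.mp ⟨w, hw, hwc⟩)
  obtain ⟨w, _, hwU, hwC⟩ := hA U Cᶜ hU hC.isOpen_compl hsub hNE hNE'
  exact (hwC (hUC hwU)).elim

/-- The key finiteness result on the geometric realization. -/
lemma main_finite [Fintype V] [Fintype E]
    (A : Set (GraphRealization V E ends)) (hA : IsPreconnected A) :
    (closure A \ A).Finite := by
  classical
  set D := closure A \ A with hD
  set T : E → Set unitInterval :=
    fun e => {t | t ≠ 0 ∧ t ≠ 1 ∧ edgePt ends e t ∈ D} with hT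
  have hTfin : ∀ e, (T e).Finite := by
    intro e
    apply finite_of_no_three
    rintro x ⟨hx0, hx1, hxD⟩ y ⟨hy0, hy1, hyD⟩ z ⟨hz0, hz1, hzD⟩ hxy hyz
    -- dichotomy on (x, y)
    rcases preconnected_dichotomy ends hA e hx0 hy1 hxD.2 hyD.2 with h1 | h1
    · -- dichotomy on (y, z)
      rcases preconnected_dichotomy ends hA e hy0 hz1 hyD.2 hzD.2 with h2 | h2
      · -- both empty: contradict y ∈ closure A
        have hyO : edgePt ends e y ∈ edgePt ends e '' Ioo x z := ⟨y, ⟨hxy, hyz⟩, rfl⟩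
        obtain ⟨w, hwO, hwA⟩ :=
          mem_closure_iff.mp hyD.1 _ (isOpen_edge_Ioo ends e x z) hyO
        obtain ⟨s, hs, rfl⟩ := hwO
        rcases lt_trichotomy s y with h | h | h
        · exact Set.eq_empty_iff_forall_notMem.mp h1 (edgePt ends e s)
            ⟨hwA, s, ⟨hs.1, h⟩, rfl⟩
        · exact hyD.2 (h ▸ hwA)
        · exact Set.eq_empty_iff_forall_notMem.mp h2 (edgePt ends e s)
            ⟨hwA, s, ⟨h, hs.2⟩, rfl⟩
      · -- A ⊆ C(y,z) : x ∈ closure A leads to contradiction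
        have hcl : closure A ⊆ edgePt ends e '' Icc y z :=
          (isClosed_edge_Icc ends e hy0 hz1).closure_subset_iff.mpr h2
        obtain ⟨s, hs, hse⟩ := hcl hxD.1
        have hs0 : s ≠ 0 := fun h => hy0 (le_antisymm (h ▸ hs.1) unitInterval.nonneg')
        have hs1 : s ≠ 1 := fun h => hz1 (le_antisymm unitInterval.le_one' (h ▸ hs.2))
        obtain ⟨-, rfl⟩ := edgePt_inj ends hs0 hs1 hse
        exact absurd hs.1 (not_le.mpr hxy)
    · -- A ⊆ C(x,y) : z ∈ closure A leads to contradiction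
      have hcl : closure A ⊆ edgePt ends e '' Icc x y :=
        (isClosed_edge_Icc ends e hx0 hy1).closure_subset_iff.mpr h1
      obtain ⟨s, hs, hse⟩ := hcl hzD.1
      have hs0 : s ≠ 0 := fun h => hx0 (le_antisymm (h ▸ hs.1) unitInterval.nonneg')
      have hs1 : s ≠ 1 := fun h => hy1 (le_antisymm unitInterval.le_one' (h ▸ hs.2))
      obtain ⟨-, rfl⟩ := edgePt_inj ends hs0 hs1 hse
      exact absurd hs.2 (not_le.mpr hyz)
  have hsub : D ⊆ vtxSet ends ∪ ⋃ e, edgePt ends e '' T e := by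
    intro y hy
    rcases mem_vtx_or_edge ends y with h | ⟨e, t, h0, h1, rfl⟩
    · exact Or.inl h
    · exact Or.inr (Set.mem_iUnion.mpr ⟨e, t, ⟨h0, h1, hy⟩, rfl⟩)
  exact ((Set.finite_range _).union
    (Set.finite_iUnion fun e => (hTfin e).image _)).subset hsub

end Aux

/-- Let `X` be a finite topological graph and let `A ⊆ X` be a connected
subspace.  Then `closure A ∖ A` is finite. -/
theorem closure_diff_finite_of_connected
    {X : Type*} [TopologicalSpace X] (hX : IsFiniteTopGraph X)
    (A : Set X) (hA : IsPreconnected A) :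
    (closure A \ A).Finite := by
  obtain ⟨V, E, hV, hE, ends, ⟨h⟩⟩ := hX
  have hB : IsPreconnected (h '' A) := hA.image h h.continuous.continuousOn
  have hfin : (closure (h '' A) \ h '' A).Finite := main_finite ends (h '' A) hB
  have himg : closure A \ A = h.symm '' (closure (h '' A) \ h '' A) := by
    rw [← h.image_closure, ← Set.image_diff h.injective]
    exact (h.toEquiv.symm_image_image _).symm
  rw [himg]
  exact hfin.image _

end TreesOfGraphs
end
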